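/- arXiv:2306.03064 — 2 statements merged into one kernel-verified Lean document; each statement's English description precedes it below -/
import Mathlib

section
/- Let m be even and let φ: Z/mZ → {-1,0,1}. Suppose the map k ↦ k + φ(k) (mod m) is a bijection of Z/mZ and φ is not identically 1 and not identically -1. Then for every k, if φ(k) = 1 then φ(k+1) = -1, and if φ(k) = -1 then φ(k-1) = 1. -/
/-- If `k ↦ k + φ k` is a bijection of `ℤ/mℤ` (m even) and `φ` is neither the global up
shift (`φ ≡ 1`) nor the global down shift (`φ ≡ -1`), then `φ k = 1` forces
`φ (k+1) = -1` and `φ k = -1` forces `φ (k-1) = 1`. -/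
theorem stmt0 (m : ℕ) [NeZero m] (hm : Even m) (φ : ZMod m → ℤ)
    (hval : ∀ k, φ k = -1 ∨ φ k = 0 ∨ φ k = 1)
    (hbij : Function.Bijective (fun k : ZMod m => k + (φ k : ZMod m)))
    (hup : ¬ (∀ k, φ k = 1)) (hdown : ¬ (∀ k, φ k = -1)) :
    ∀ k : ZMod m, (φ k = 1 → φ (k + 1) = -1) ∧ (φ k = -1 → φ (k - 1) = 1) := by
  have hm2 : 2 ≤ m := by
    obtain ⟨r, hr⟩ := hm
    have := NeZero.ne m
    omega
  haveI : Fact (1 < m) := ⟨by omega⟩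
  have hinj : ∀ a b : ZMod m, a + (φ a : ZMod m) = b + (φ b : ZMod m) → a = b :=
    fun a b h => hbij.1 h
  intro k
  constructor
  · intro hk
    rcases hval (k + 1) with h | h | h
    · exact h
    · exfalso
      have he : k + (φ k : ZMod m) = (k + 1) + (φ (k + 1) : ZMod m) := by
        rw [hk, h]; push_cast; ring
      have := hinj _ _ he
      have h10 : (1 : ZMod m) = 0 := left_eq_add.mp this
      exact one_ne_zero h10
    · exfalso
      apply hup
      have key : ∀ n : ℕ, φ (k + n) = 1 ∧ φ (k + n + 1) = 1 := by
        intro n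
        induction n with
        | zero => simpa using ⟨hk, h⟩
        | succ n ih =>
          obtain ⟨h1, h2⟩ := ih
          have e1 : (k + (n + 1 : ℕ) : ZMod m) = k + n + 1 := by push_cast; ring
          refine ⟨by rw [e1]; exact h2, ?_⟩
          rw [e1]
          rcases hval (k + n + 1 + 1) with h3 | h3 | h3
          · exfalso
            have he : (k + n + 1 + 1) + (φ (k + n + 1 + 1) : ZMod m)
                = (k + n) + (φ (k + n) : ZMod m) := by
              rw [h3, h1]; push_cast; ring
            have heq := hinj _ _ he
            rw [heq] at h3
            omega
          · exfalso
            have he : (k + n + 1 + 1) + (φ (k + n + 1 + 1) : ZMod m)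
                = (k + n + 1) + (φ (k + n + 1) : ZMod m) := by
              rw [h3, h2]; push_cast; ring
            have heq := hinj _ _ he
            rw [heq] at h3
            omega
          · exact h3
      intro x
      have hx : ((x - k).val : ZMod m) = x - k := ZMod.natCast_rightInverse (x - k)
      have := (key (x - k).val).1
      rwa [hx, add_sub_cancel] at this
  · intro hk
    rcases hval (k - 1) with h | h | h
    · exfalso
      apply hdown
      have key : ∀ n : ℕ, φ (k - n) = -1 ∧ φ (k - n - 1) = -1 := by
        intro n
        induction n with
        | zero => simpa using ⟨hk, h⟩
        | succ n ih =>
          obtain ⟨h1, h2⟩ := ih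
          have e1 : (k - (n + 1 : ℕ) : ZMod m) = k - n - 1 := by push_cast; ring
          refine ⟨by rw [e1]; exact h2, ?_⟩
          rw [e1]
          rcases hval (k - n - 1 - 1) with h3 | h3 | h3
          · exact h3
          · exfalso
            have he : (k - n - 1 - 1) + (φ (k - n - 1 - 1) : ZMod m)
                = (k - n - 1) + (φ (k - n - 1) : ZMod m) := by
              rw [h3, h2]; push_cast; ring
            have heq := hinj _ _ he
            rw [heq] at h3
            omega
          · exfalso
            have he : (k - n - 1 - 1) + (φ (k - n - 1 - 1) : ZMod m)
                = (k - n) + (φ (k - n) : ZMod m) := by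
              rw [h3, h1]; push_cast; ring
            have heq := hinj _ _ he
            rw [heq] at h3
            omega
      intro x
      have hx : ((k - x).val : ZMod m) = k - x := ZMod.natCast_rightInverse (k - x)
      have := (key (k - x).val).1
      rwa [hx, sub_sub_cancel] at this
    · exfalso
      have he : k + (φ k : ZMod m) = (k - 1) + (φ (k - 1) : ZMod m) := by
        rw [hk, h]; push_cast; ring
      have := hinj _ _ he
      have h10 : (1 : ZMod m) = 0 := sub_eq_self.mp this.symm
      exact one_ne_zero h10
    · exact h
end

section
/- A map φ: Z/mZ → {-1,0,1} with no value pattern violating bijectivity is a bijection k ↦ k+φ(k) (mod m) if and only if either φ ≡ 1, or φ ≡ -1, or the set {k : φ(k)=1} is an independent set in C_m and φ(k) = -1 exactly when φ(k-1) = 1 (and φ(k)=0 otherwise). In particular, bijections of Z/mZ of the form k ↦ k+φ(k) with φ taking values in {-1,0,1} and not a global shift are in bijection with independent sets of the cycle graph C_m. -/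
/-- Characterization of bijections `k ↦ k + φ k` of `ℤ/mℤ` with `φ` taking values in
`{-1,0,1}`: such a map is a bijection iff `φ` is a global up shift, a global down
shift, or the set `{k | φ k = 1}` is an independent set of the cycle graph `C_m`
(no two consecutive elements) and `φ k = -1` exactly when `φ (k-1) = 1` (so `φ k = 0`
otherwise).  In particular, non-shift bijections correspond exactly to independent
sets of `C_m`. -/
theorem stmt2 (m : ℕ) [NeZero m] (φ : ZMod m → ℤ)
    (hval : ∀ k, φ k = -1 ∨ φ k = 0 ∨ φ k = 1) :
    Function.Bijective (fun k : ZMod m => k + (φ k : ZMod m)) ↔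
      (∀ k, φ k = 1) ∨ (∀ k, φ k = -1) ∨
        ((∀ k : ZMod m, φ k = 1 → φ (k + 1) ≠ 1) ∧
          (∀ k : ZMod m, φ k = -1 ↔ φ (k - 1) = 1)) := by
  constructor
  · intro hbij
    have hinj := hbij.1
    -- key local lemmas from injectivity
    have L0 : ∀ k : ZMod m, φ k = 1 → φ (k + 1) ≠ 0 := by
      intro k hk hk'
      have heq : k = k + 1 := by
        apply hinj
        simp only [hk, hk']
        push_cast
        ring
      have : φ k = φ (k + 1) := by rw [← heq]
      rw [hk, hk'] at this; norm_num at this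
    have L1 : ∀ k : ZMod m, φ k = 1 → φ (k + 2) ≠ -1 := by
      intro k hk hk'
      have heq : k = k + 2 := by
        apply hinj
        simp only [hk, hk']
        push_cast
        ring
      have : φ k = φ (k + 2) := by rw [← heq]
      rw [hk, hk'] at this; norm_num at this
    have L0' : ∀ k : ZMod m, φ k = -1 → φ (k - 1) ≠ 0 := by
      intro k hk hk'
      have heq : k - 1 = k := by
        apply hinj
        simp only [hk, hk']
        push_cast
        ring
      have : φ (k - 1) = φ k := by rw [heq]
      rw [hk, hk'] at this; norm_num at this
    -- consecutive 1s propagate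
    have A : ∀ k : ZMod m, φ k = 1 → φ (k + 1) = 1 → ∀ j, φ j = 1 := by
      intro k h0 h1 j
      have step : ∀ n : ℕ, φ (k + n) = 1 ∧ φ (k + n + 1) = 1 := by
        intro n
        induction n with
        | zero => simpa using ⟨h0, h1⟩
        | succ n ih =>
          obtain ⟨ha, hb⟩ := ih
          have e1 : k + ((n + 1 : ℕ) : ZMod m) = k + (n : ZMod m) + 1 := by
            push_cast; ring
          have e2 : k + ((n + 1 : ℕ) : ZMod m) + 1 = k + (n : ZMod m) + 2 := by
            push_cast; ring
          refine ⟨by rw [e1]; exact hb, ?_⟩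
          rw [e2]
          rcases hval (k + (n : ZMod m) + 2) with h | h | h
          · exact absurd h (L1 _ ha)
          · exact absurd h (by have := L0 _ hb; rwa [add_assoc, (by norm_num : (1:ZMod m)+1 = 2)] at this)
          · exact h
      have : k + (((j - k).val : ℕ) : ZMod m) = j := by
        rw [ZMod.natCast_val, ZMod.cast_id]; ring
      have := (step (j - k).val).1
      rwa [‹k + (((j - k).val : ℕ) : ZMod m) = j›] at this
    -- consecutive -1s propagate
    have B : ∀ k : ZMod m, φ k = -1 → φ (k - 1) = -1 → ∀ j, φ j = -1 := by
      intro k h0 h1 j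
      have step : ∀ n : ℕ, φ (k - n) = -1 ∧ φ (k - n - 1) = -1 := by
        intro n
        induction n with
        | zero => simpa using ⟨h0, h1⟩
        | succ n ih =>
          obtain ⟨ha, hb⟩ := ih
          have e1 : k - ((n + 1 : ℕ) : ZMod m) = k - (n : ZMod m) - 1 := by
            push_cast; ring
          have e2 : k - ((n + 1 : ℕ) : ZMod m) - 1 = k - (n : ZMod m) - 2 := by
            push_cast; ring
          refine ⟨by rw [e1]; exact hb, ?_⟩
          rw [e2]
          rcases hval (k - (n : ZMod m) - 2) with h | h | h
          · exact h
          · exact absurd h (by have := L0' _ hb; rwa [(by ring : k - (n:ZMod m) - 1 - 1 = k - (n:ZMod m) - 2)] at this)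
          · exfalso
            have := L1 _ h
            rw [(by ring : k - (n:ZMod m) - 2 + 2 = k - (n:ZMod m))] at this
            exact this ha
      have he : k - (((k - j).val : ℕ) : ZMod m) = j := by
        rw [ZMod.natCast_val, ZMod.cast_id]; ring
      have := (step (k - j).val).1
      rwa [he] at this
    by_cases hall1 : ∀ k, φ k = 1
    · exact Or.inl hall1
    by_cases hall2 : ∀ k, φ k = -1
    · exact Or.inr (Or.inl hall2)
    refine Or.inr (Or.inr ⟨?_, ?_⟩)
    · intro k hk hk'
      exact hall1 (A k hk hk')
    · intro k
      constructor
      · intro hk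
        rcases hval (k - 1) with h | h | h
        · exact absurd (B k hk h) hall2
        · exact absurd h (L0' k hk)
        · exact h
      · intro hk
        rcases hval k with h | h | h
        · exact h
        · exfalso
          have := L0 (k - 1) hk
          rw [sub_add_cancel] at this
          exact this h
        · exfalso
          have := A (k - 1) hk (by rwa [sub_add_cancel])
          exact hall1 this
  · -- backward direction
    intro h
    have hfin : ∀ g : ZMod m → ZMod m, Function.Injective g → Function.Bijective g :=
      fun g hg => Finite.injective_iff_bijective.mp hg
    rcases h with h | h | ⟨H1, H2⟩
    · apply hfin
      intro a b hab
      simp only [h] at hab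
      push_cast at hab
      exact add_right_cancel hab
    · apply hfin
      intro a b hab
      simp only [h] at hab
      push_cast at hab
      exact add_right_cancel hab
    · apply hfin
      intro a b hab
      simp only at hab
      rcases hval a with ha | ha | ha <;> rcases hval b with hb | hb | hb <;>
        rw [ha, hb] at hab <;> push_cast at hab
      -- (-1,-1)
      · exact by linear_combination hab
      -- (-1,0): a - 1 = b, but φ(a-1)=1 ≠ 0
      · exfalso
        have h1 : φ (a - 1) = 1 := (H2 a).mp ha
        rw [(by linear_combination hab : a - 1 = b)] at h1
        rw [h1] at hb; norm_num at hb
      -- (-1,1): φ(a-1)=1 and a-1 = b+1 so φ(b+1)=1, but φ(b+1)=-1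
      · exfalso
        have h1 : φ (a - 1) = 1 := (H2 a).mp ha
        have h2 : φ (b + 1) = -1 := (H2 (b + 1)).mpr (by rwa [add_sub_cancel_right])
        rw [(by linear_combination hab : a - 1 = b + 1)] at h1
        rw [h1] at h2; norm_num at h2
      -- (0,-1)
      · exfalso
        have h1 : φ (b - 1) = 1 := (H2 b).mp hb
        rw [(by linear_combination -hab : b - 1 = a)] at h1
        rw [h1] at ha; norm_num at ha
      -- (0,0)
      · exact add_right_cancel hab
      -- (0,1): a = b + 1, φ(b+1) = -1 ≠ 0
      · exfalso
        have h2 : φ (b + 1) = -1 := (H2 (b + 1)).mpr (by rwa [add_sub_cancel_right])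
        rw [(by linear_combination -hab : b + 1 = a)] at h2
        rw [h2] at ha; norm_num at ha
      -- (1,-1)
      · exfalso
        have h1 : φ (b - 1) = 1 := (H2 b).mp hb
        have h2 : φ (a + 1) = -1 := (H2 (a + 1)).mpr (by rwa [add_sub_cancel_right])
        rw [(by linear_combination -hab : b - 1 = a + 1)] at h1
        rw [h1] at h2; norm_num at h2
      -- (1,0)
      · exfalso
        have h2 : φ (a + 1) = -1 := (H2 (a + 1)).mpr (by rwa [add_sub_cancel_right])
        rw [(by linear_combination hab : a + 1 = b)] at h2
        rw [h2] at hb; norm_num at hb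
      -- (1,1)
      · exact add_right_cancel hab
end
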